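/- For all real numbers α, β with 0 < α < β and every compact set C contained in the hyperboloid ℍ², there exists L ≥ 0 with the following property: for every function U : I⁺(0) → ℝ such that U(x) > 0 for all x, U(μ·x) = U(x)/μ for all μ > 0 and x ∈ I⁺(0) ((−1)-homogeneity), the function x ↦ −1/U(x) is convex on I⁺(0), and α ≤ U(x) ≤ β for all x ∈ ℍ², one has |U(x) − U(y)| ≤ L·‖x − y‖ for all x, y ∈ C, where ‖·‖ denotes the Euclidean norm on ℝ³. -/
import Mathlib


/-- The open future cone `I⁺(0)` in Minkowski 3-space (as a subset of Euclidean ℝ³). -/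
def futureCone : Set (EuclideanSpace ℝ (Fin 3)) :=
  {x | x 0 * x 0 + x 1 * x 1 - x 2 * x 2 < 0 ∧ 0 < x 2}

/-- The hyperboloid `ℍ² = {x ∈ I⁺(0) | ⟨x,x⟩₋ = -1}`. -/
def hyperboloid : Set (EuclideanSpace ℝ (Fin 3)) :=
  {x | x ∈ futureCone ∧ x 0 * x 0 + x 1 * x 1 - x 2 * x 2 = -1}

lemma futureCone_isOpen : IsOpen futureCone := by
  have h0 : Continuous fun x : EuclideanSpace ℝ (Fin 3) => x 0 :=
    (EuclideanSpace.proj (0 : Fin 3) : EuclideanSpace ℝ (Fin 3) →L[ℝ] ℝ).continuous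
  have h1 : Continuous fun x : EuclideanSpace ℝ (Fin 3) => x 1 :=
    (EuclideanSpace.proj (1 : Fin 3) : EuclideanSpace ℝ (Fin 3) →L[ℝ] ℝ).continuous
  have h2 : Continuous fun x : EuclideanSpace ℝ (Fin 3) => x 2 :=
    (EuclideanSpace.proj (2 : Fin 3) : EuclideanSpace ℝ (Fin 3) →L[ℝ] ℝ).continuous
  have : futureCone = {x | x 0 * x 0 + x 1 * x 1 - x 2 * x 2 < 0} ∩ {x | 0 < x 2} := rfl
  rw [this]
  exact (isOpen_lt (by fun_prop) continuous_const).inter (isOpen_lt continuous_const h2)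

lemma coord2_le_norm (x : EuclideanSpace ℝ (Fin 3)) : x 2 ≤ ‖x‖ := by
  rw [EuclideanSpace.norm_eq]
  have h1 : x 2 ≤ Real.sqrt ((x 2) ^ 2) := by
    rw [Real.sqrt_sq_eq_abs]; exact le_abs_self _
  refine h1.trans (Real.sqrt_le_sqrt ?_)
  rw [Fin.sum_univ_three]
  simp only [Real.norm_eq_abs, sq_abs]
  nlinarith [sq_nonneg (x 0), sq_nonneg (x 1)]

/-- positive `(-1)`-homogeneous functions `U` on the future cone with
`-1/U` convex and `α ≤ U ≤ β` on the hyperboloid are equi-Lipschitz (for the Euclidean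
norm) on any compact subset `C` of the hyperboloid. -/
theorem stmt5 (α β : ℝ) (hα : 0 < α) (hαβ : α < β)
    (C : Set (EuclideanSpace ℝ (Fin 3))) (hC : IsCompact C) (hCsub : C ⊆ hyperboloid) :
    ∃ L : ℝ, 0 ≤ L ∧ ∀ U : EuclideanSpace ℝ (Fin 3) → ℝ,
      (∀ x ∈ futureCone, 0 < U x) →
      (∀ μ : ℝ, 0 < μ → ∀ x ∈ futureCone, U (μ • x) = U x / μ) →
      ConvexOn ℝ futureCone (fun x => -(1 / U x)) →
      (∀ x ∈ hyperboloid, α ≤ U x ∧ U x ≤ β) →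
      ∀ x ∈ C, ∀ y ∈ C, |U x - U y| ≤ L * ‖x - y‖ := by
  have hCcone : C ⊆ futureCone := fun x hx => (hCsub hx).1
  obtain ⟨δ, hδpos, hδsub⟩ :=
    hC.exists_cthickening_subset_open futureCone_isOpen hCcone
  set N : Set (EuclideanSpace ℝ (Fin 3)) := Metric.cthickening δ C with hN
  have hNcpt : IsCompact N := hC.cthickening
  obtain ⟨R₀, hR₀⟩ := hNcpt.isBounded.exists_norm_le
  set R : ℝ := max R₀ 0 with hRdef
  have hR0 : 0 ≤ R := le_max_right _ _
  have hRN : ∀ x ∈ N, ‖x‖ ≤ R := fun x hx => (hR₀ x hx).trans (le_max_left _ _)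
  set M : ℝ := R / α with hMdef
  have hM0 : 0 ≤ M := div_nonneg hR0 hα.le
  set K : ℝ := 2 * M / (2 * δ / 3) with hKdef
  have hK0 : 0 ≤ K := div_nonneg (by linarith) (by linarith)
  have hL1 : (0:ℝ) ≤ β ^ 2 * K := mul_nonneg (sq_nonneg β) hK0
  have hL2 : (0:ℝ) ≤ β / (δ / 3) := div_nonneg (by linarith) (by linarith)
  refine ⟨β ^ 2 * K + β / (δ / 3), by linarith, ?_⟩
  intro U hUpos hUhom hUconv hUab
  -- bound |V| ≤ M on N, where V x = -(1 / U x)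
  have hVbound : ∀ x ∈ N, |-(1 / U x)| ≤ M := by
    intro x hxN
    have hxc : x ∈ futureCone := hδsub hxN
    obtain ⟨hx1, hx2⟩ := hxc
    set q : ℝ := x 2 * x 2 - (x 0 * x 0 + x 1 * x 1) with hq
    have hqpos : 0 < q := by simp only [hq]; linarith
    set μ : ℝ := Real.sqrt q with hμ
    have hμpos : 0 < μ := Real.sqrt_pos.2 hqpos
    have hμμ : μ * μ = q := Real.mul_self_sqrt hqpos.le
    have hμle : μ ≤ x 2 := by
      have : q ≤ x 2 * x 2 := by nlinarith [sq_nonneg (x 0), sq_nonneg (x 1)]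
      calc μ ≤ Real.sqrt (x 2 * x 2) := Real.sqrt_le_sqrt this
        _ = x 2 := Real.sqrt_mul_self hx2.le
    set h : EuclideanSpace ℝ (Fin 3) := μ⁻¹ • x with hh
    have happ : ∀ i, h i = μ⁻¹ * x i := fun i => rfl
    have hhyp : h ∈ hyperboloid := by
      have hform : h 0 * h 0 + h 1 * h 1 - h 2 * h 2 = -1 := by
        rw [happ 0, happ 1, happ 2]
        field_simp
        nlinarith [hμμ]
      refine ⟨⟨by rw [hform]; norm_num, ?_⟩, hform⟩
      rw [happ 2]; positivity
    have hxh : x = μ • h := by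
      rw [hh, smul_smul, mul_inv_cancel₀ hμpos.ne', one_smul]
    have hUx : U x = U h / μ := by
      rw [hxh]; exact hUhom μ hμpos h hhyp.1
    have hUh : α ≤ U h ∧ U h ≤ β := hUab h hhyp
    have hUxpos : 0 < U x := hUpos x ⟨hx1, hx2⟩
    rw [abs_neg, abs_of_nonneg (by positivity)]
    rw [hUx, one_div_div]
    have hnorm : μ ≤ R := le_trans hμle ((coord2_le_norm x).trans (hRN x hxN))
    calc μ / U h ≤ μ / α := by
          apply div_le_div_of_nonneg_left hμpos.le hα hUh.1
      _ ≤ R / α := by gcongr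
  -- Lipschitz bound for V on small balls around points of C
  have hVlip : ∀ x ∈ C, ∀ y ∈ C, ‖x - y‖ < δ / 3 →
      |(-(1 / U x)) - (-(1 / U y))| ≤ K * ‖x - y‖ := by
    intro x hxC y hyC hclose
    have hball : Metric.ball x δ ⊆ N := by
      intro z hz
      exact Metric.mem_cthickening_of_dist_le z x δ C hxC
        (by rw [Metric.mem_ball] at hz; exact hz.le)
    have hconv : ConvexOn ℝ (Metric.ball x δ) (fun z => -(1 / U z)) :=
      hUconv.subset (fun z hz => hδsub (hball hz)) (convex_ball x δ)
    have hε : (0:ℝ) < 2 * δ / 3 := by linarith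
    have hlip := hconv.lipschitzOnWith_of_abs_le hε
      (fun a ha => hVbound a (hball (Metric.mem_ball.2 ha)))
    have hxy : y ∈ Metric.ball x (δ - 2 * δ / 3) := by
      rw [Metric.mem_ball, dist_eq_norm]
      rw [← norm_neg]
      simpa [neg_sub] using lt_of_lt_of_le hclose (by linarith)
    have hxx : x ∈ Metric.ball x (δ - 2 * δ / 3) := by
      rw [Metric.mem_ball, dist_self]; linarith
    have := hlip.dist_le_mul x hxx y hxy
    rw [Real.dist_eq, dist_eq_norm] at this
    refine this.trans ?_
    gcongr
    exact Real.coe_toNNReal _ (by positivity) |>.le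
  intro x hxC y hyC
  have hUx := hUab x (hCsub hxC)
  have hUy := hUab y (hCsub hyC)
  have hUxpos : 0 < U x := lt_of_lt_of_le hα hUx.1
  have hUypos : 0 < U y := lt_of_lt_of_le hα hUy.1
  rcases lt_or_ge ‖x - y‖ (δ / 3) with hcase | hcase
  · have hlip := hVlip x hxC y hyC hcase
    have key : U x - U y = U x * U y * ((-(1 / U x)) - (-(1 / U y))) := by
      field_simp
      ring
    rw [key, abs_mul, abs_of_nonneg (mul_nonneg hUxpos.le hUypos.le)]
    calc U x * U y * |(-(1 / U x)) - (-(1 / U y))| ≤ β * β * (K * ‖x - y‖) := by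
          apply mul_le_mul _ hlip (abs_nonneg _) (by nlinarith)
          exact mul_le_mul hUx.2 hUy.2 hUypos.le (by linarith)
      _ = β ^ 2 * K * ‖x - y‖ := by ring
      _ ≤ (β ^ 2 * K + β / (δ / 3)) * ‖x - y‖ := by
          apply mul_le_mul_of_nonneg_right _ (norm_nonneg _)
          linarith
  · have h1 : |U x - U y| ≤ β := by
      rw [abs_sub_le_iff]; constructor <;> linarith [hUx.1, hUx.2, hUy.1, hUy.2]
    calc |U x - U y| ≤ β := h1
      _ = (β / (δ / 3)) * (δ / 3) := by field_simp
      _ ≤ (β / (δ / 3)) * ‖x - y‖ := by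
          apply mul_le_mul_of_nonneg_left hcase hL2
      _ ≤ (β ^ 2 * K + β / (δ / 3)) * ‖x - y‖ := by
          apply mul_le_mul_of_nonneg_right _ (norm_nonneg _)
          linarith
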